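/- For a real-valued random variable x with finite variance, the variance of ReLU(x) = max(0, x) is at most the variance of x. -/

import Mathlib

open MeasureTheory ProbabilityTheory
open scoped NNReal

/-! The mean minimises the mean squared deviation, so for a `K`-Lipschitz `f`
`Var f(X) ≤ E[(f X - f (E X))²] ≤ K² E[(X - E X)²] = K² Var X`, and ReLU is `1`-Lipschitz. -/

lemma LipschitzWith.sq_sub_le {f : ℝ → ℝ} {K : ℝ≥0} (hf : LipschitzWith K f) (a b : ℝ) :
    (f a - f b) ^ 2 ≤ K ^ 2 * (a - b) ^ 2 := by
  have h : |f a - f b| ≤ K * |a - b| := hf.dist_le_mul a b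
  calc (f a - f b) ^ 2 = |f a - f b| ^ 2 := (sq_abs _).symm
    _ ≤ (K * |a - b|) ^ 2 := pow_le_pow_left₀ (abs_nonneg _) h 2
    _ = K ^ 2 * (a - b) ^ 2 := by rw [mul_pow, sq_abs]

lemma ProbabilityTheory.variance_comp_le_of_lipschitzWith {Ω : Type*} [MeasurableSpace Ω]
    {μ : Measure Ω} [IsProbabilityMeasure μ] {X : Ω → ℝ} {f : ℝ → ℝ} {K : ℝ≥0}
    (hf : LipschitzWith K f) (hX : MemLp X 2 μ) :
    Var[fun ω ↦ f (X ω); μ] ≤ K ^ 2 * Var[X; μ] := by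
  set m := μ[X]
  have hfX : AEStronglyMeasurable (fun ω ↦ f (X ω)) μ :=
    hf.continuous.comp_aestronglyMeasurable hX.1
  calc Var[fun ω ↦ f (X ω); μ] = Var[fun ω ↦ f (X ω) - f m; μ] :=
        (variance_sub_const hfX _).symm
    _ ≤ ∫ ω, (f (X ω) - f m) ^ 2 ∂μ :=
        variance_le_expectation_sq (hfX.sub aestronglyMeasurable_const)
    _ ≤ ∫ ω, K ^ 2 * (X ω - m) ^ 2 ∂μ :=
        integral_mono_of_nonneg (.of_forall fun _ ↦ sq_nonneg _)
          ((hX.sub (memLp_const m)).integrable_sq.const_mul _)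
          (.of_forall fun ω ↦ hf.sq_sub_le (X ω) m)
    _ = K ^ 2 * Var[X; μ] := by
        rw [integral_const_mul, variance_eq_integral hX.1.aemeasurable]

theorem variance_relu_le_general {Ω : Type*} [MeasureSpace Ω]
    (μ : Measure Ω) [IsProbabilityMeasure μ]
    (x : Ω → ℝ) (hx : MemLp x 2 μ) :
    variance (fun ω => max 0 (x ω)) μ ≤ variance x μ := by
  have hrelu : LipschitzWith 1 fun y : ℝ ↦ max 0 y := LipschitzWith.id.const_max 0
  simpa using variance_comp_le_of_lipschitzWith hrelu hx

/-- For a real-valued random variable `x` with finite variance, the variance of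
`ReLU(x) = max(0, x)` is at most the variance of `x`. -/
theorem variance_relu_le {Ω : Type*} [MeasureSpace Ω]
    (μ : Measure Ω) [IsProbabilityMeasure μ]
    (x : Ω → ℝ) (hx : MemLp x 2 μ) (hxm : Measurable x) :
    variance (fun ω => max 0 (x ω)) μ ≤ variance x μ :=
  variance_relu_le_general μ x hx
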